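/- Let S be a finite nonempty alphabet, n ≥ 1, F = {f_i : ℝⁿ → ℝⁿ}_{i∈S} a family of continuous maps, C a covering family of languages over S, and W : C × ℝⁿ → ℝ a C-memory-based Lyapunov function for F with bounding functions α₁, α₂ ∈ K∞ and rate γ ∈ [0,1). Then for every switching signal σ : ℕ → S, every x₀ ∈ ℝⁿ, and every k ∈ ℕ, the solution satisfies |Ψ_σ(k, x₀)| ≤ α₁⁻¹(γᵏ α₂(|x₀|)). -/

import Mathlib

open Filter Topology NNReal

def IsClassKInf (α : ℝ≥0 → ℝ≥0) : Prop :=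
  Continuous α ∧ α 0 = 0 ∧ StrictMono α ∧ ∀ M : ℝ≥0, ∃ r, M ≤ α r

def IsClassKL (β : ℝ≥0 → ℝ≥0 → ℝ≥0) : Prop :=
  Continuous (fun p : ℝ≥0 × ℝ≥0 => β p.1 p.2) ∧
  (∀ t, Continuous (fun r => β r t) ∧ β 0 t = 0 ∧ StrictMono (fun r => β r t)) ∧
  (∀ r, Antitone (β r) ∧ Tendsto (β r) atTop (𝓝 0))

def PathComplete {N S : Type*} (E : Set (N × N × S)) : Prop :=
  ∀ K : ℕ, 1 ≤ K → ∀ j : Fin K → S, ∃ a : Fin (K + 1) → N,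
    ∀ k : Fin K, (a k.castSucc, a k.succ, j k) ∈ E

def sol {n : ℕ} {S : Type*} (f : S → EuclideanSpace ℝ (Fin n) → EuclideanSpace ℝ (Fin n))
    (σ : ℕ → S) (x0 : EuclideanSpace ℝ (Fin n)) : ℕ → EuclideanSpace ℝ (Fin n)
  | 0 => x0
  | k + 1 => f (σ k) (sol f σ x0 k)

def UGAS {n : ℕ} {S : Type*}
    (f : S → EuclideanSpace ℝ (Fin n) → EuclideanSpace ℝ (Fin n)) : Prop :=
  ∃ β : ℝ≥0 → ℝ≥0 → ℝ≥0, IsClassKL β ∧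
    ∀ (σ : ℕ → S) (x0 : EuclideanSpace ℝ (Fin n)) (k : ℕ),
      ‖sol f σ x0 k‖₊ ≤ β ‖x0‖₊ (k : ℝ≥0)

def IsPCLF {n : ℕ} {S N : Type*} (E : Set (N × N × S))
    (f : S → EuclideanSpace ℝ (Fin n) → EuclideanSpace ℝ (Fin n))
    (V : N → EuclideanSpace ℝ (Fin n) → ℝ) : Prop :=
  PathComplete E ∧ (∀ s, Continuous (V s)) ∧
  ∃ (α₁ α₂ : ℝ≥0 → ℝ≥0) (γ : ℝ≥0), IsClassKInf α₁ ∧ IsClassKInf α₂ ∧ γ < 1 ∧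
    (∀ s x, (α₁ ‖x‖₊ : ℝ) ≤ V s x ∧ V s x ≤ (α₂ ‖x‖₊ : ℝ)) ∧
    (∀ a b i, (a, b, i) ∈ E → ∀ x, V b (f i x) ≤ (γ : ℝ) * V a x)

def IsCoveringFamily {S : Type*} (C : Finset (Set (List S))) : Prop :=
  (∀ B ∈ C, Language.IsRegular (B : Language S)) ∧
  (⋃ B ∈ C, B) = Set.univ ∧
  ∀ B ∈ C, ∀ h : S, ∃ C' ∈ C, (fun w => h :: w) '' B ⊆ C'

def IsMBLF {n : ℕ} {S : Type*} (C : Finset (Set (List S)))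
    (f : S → EuclideanSpace ℝ (Fin n) → EuclideanSpace ℝ (Fin n))
    (W : {B // B ∈ C} → EuclideanSpace ℝ (Fin n) → ℝ) : Prop :=
  (∀ B, Continuous (W B)) ∧
  ∃ (α₁ α₂ : ℝ≥0 → ℝ≥0) (γ : ℝ≥0), IsClassKInf α₁ ∧ IsClassKInf α₂ ∧ γ < 1 ∧
    (∀ B x, (α₁ ‖x‖₊ : ℝ) ≤ W B x ∧ W B x ≤ (α₂ ‖x‖₊ : ℝ)) ∧
    (∀ (B C' : {B // B ∈ C}) (h : S),
      (fun w => h :: w) '' (B : Set (List S)) ⊆ (C' : Set (List S)) →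
      ∀ x, W C' (f h x) ≤ (γ : ℝ) * W B x)

def prefixClass {S : Type*} (i : List S) : Set (List S) := {w | w <+: i ∨ i <+: w}

/-!
Along a switching signal `σ`, the covering property lets one choose languages `B k ∈ C` with
`σ k · B k ⊆ B (k + 1)`, so the memory-based decrease condition applies at every step and
`W (B k) (x k) ≤ γ ^ k * W (B 0) x₀`. The sandwich bounds turn this into
`α₁ ‖x k‖ ≤ γ ^ k * α₂ ‖x₀‖`, and a class-`K∞` function is an order isomorphism of `ℝ≥0`,
so `α₁` can be inverted.
-/

namespace IsClassKInf

variable {α : ℝ≥0 → ℝ≥0}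

theorem surjective (hα : IsClassKInf α) : Function.Surjective α := by
  obtain ⟨hcont, hzero, -, hunbdd⟩ := hα
  intro y
  obtain ⟨r, hr⟩ := hunbdd y
  obtain ⟨c, -, hc⟩ := intermediate_value_Icc (zero_le : 0 ≤ r) hcont.continuousOn
    (⟨hzero.trans_le zero_le, hr⟩ : y ∈ Set.Icc (α 0) (α r))
  exact ⟨c, hc⟩

theorem le_invFun_iff (hα : IsClassKInf α) {r y : ℝ≥0} :
    r ≤ Function.invFun α y ↔ α r ≤ y := by
  rw [← hα.2.2.1.le_iff_le, Function.invFun_eq (hα.surjective y)]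

end IsClassKInf

namespace IsCoveringFamily

variable {S : Type*} {C : Finset (Set (List S))}

theorem nonempty (hC : IsCoveringFamily C) : Nonempty {B // B ∈ C} := by
  have hnil : ([] : List S) ∈ ⋃ B ∈ C, B := hC.2.1 ▸ Set.mem_univ _
  obtain ⟨B, hB, -⟩ := Set.mem_iUnion₂.mp hnil
  exact ⟨⟨B, hB⟩⟩

theorem exists_seq_cons_image_subset (hC : IsCoveringFamily C) (σ : ℕ → S) :
    ∃ B : ℕ → {B // B ∈ C},
      ∀ k, (fun w => σ k :: w) '' (B k : Set (List S)) ⊆ (B (k + 1) : Set (List S)) := by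
  obtain ⟨B₀⟩ := hC.nonempty
  choose next hnext using fun (B : {B // B ∈ C}) (h : S) => hC.2.2 B.1 B.2 h
  exact ⟨fun k => Nat.rec B₀ (fun k B => ⟨next B (σ k), (hnext B (σ k)).1⟩) k,
    fun k => (hnext _ _).2⟩

end IsCoveringFamily

theorem apply_sol_le_pow_mul {n : ℕ} {S ι : Type*}
    (f : S → EuclideanSpace ℝ (Fin n) → EuclideanSpace ℝ (Fin n))
    (W : ι → EuclideanSpace ℝ (Fin n) → ℝ) {γ : ℝ} (hγ : 0 ≤ γ) (σ : ℕ → S) (B : ℕ → ι)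
    (hB : ∀ k x, W (B (k + 1)) (f (σ k) x) ≤ γ * W (B k) x)
    (x0 : EuclideanSpace ℝ (Fin n)) (k : ℕ) :
    W (B k) (sol f σ x0 k) ≤ γ ^ k * W (B 0) x0 := by
  induction k with
  | zero => simp [sol]
  | succ k ih =>
    calc W (B (k + 1)) (sol f σ x0 (k + 1)) ≤ γ * W (B k) (sol f σ x0 k) := hB k _
      _ ≤ γ * (γ ^ k * W (B 0) x0) := mul_le_mul_of_nonneg_left ih hγ
      _ = γ ^ (k + 1) * W (B 0) x0 := by ring

theorem mblf_explicit_bound_general {S : Type}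
    (n : ℕ)
    (f : S → EuclideanSpace ℝ (Fin n) → EuclideanSpace ℝ (Fin n))
    (C : Finset (Set (List S))) (hC : IsCoveringFamily C)
    (W : {B // B ∈ C} → EuclideanSpace ℝ (Fin n) → ℝ)
    (α₁ α₂ : ℝ≥0 → ℝ≥0) (γ : ℝ≥0)
    (hα₁ : IsClassKInf α₁)
    (hsand : ∀ B x, (α₁ ‖x‖₊ : ℝ) ≤ W B x ∧ W B x ≤ (α₂ ‖x‖₊ : ℝ))
    (hdec : ∀ (B C' : {B // B ∈ C}) (h : S),
      (fun w => h :: w) '' (B : Set (List S)) ⊆ (C' : Set (List S)) →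
      ∀ x, W C' (f h x) ≤ (γ : ℝ) * W B x) :
    ∀ (σ : ℕ → S) (x0 : EuclideanSpace ℝ (Fin n)) (k : ℕ),
      ‖sol f σ x0 k‖₊ ≤ Function.invFun α₁ (γ ^ k * α₂ ‖x0‖₊) := by
  intro σ x0 k
  obtain ⟨B, hB⟩ := hC.exists_seq_cons_image_subset σ
  have hdecay := apply_sol_le_pow_mul f W γ.coe_nonneg σ B
    (fun k => hdec (B k) (B (k + 1)) (σ k) (hB k)) x0 k
  rw [hα₁.le_invFun_iff, ← NNReal.coe_le_coe, NNReal.coe_mul, NNReal.coe_pow]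
  calc (α₁ ‖sol f σ x0 k‖₊ : ℝ) ≤ W (B k) (sol f σ x0 k) := (hsand _ _).1
    _ ≤ γ ^ k * W (B 0) x0 := hdecay
    _ ≤ γ ^ k * α₂ ‖x0‖₊ := by gcongr; exact (hsand _ _).2

/-- explicit decay estimate produced by a memory-based
Lyapunov function with bounds `α₁, α₂` and rate `γ`. -/
theorem mblf_explicit_bound {S : Type} [Fintype S] [Nonempty S]
    (n : ℕ) (hn : 1 ≤ n)
    (f : S → EuclideanSpace ℝ (Fin n) → EuclideanSpace ℝ (Fin n))
    (hf : ∀ i, Continuous (f i))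
    (C : Finset (Set (List S))) (hC : IsCoveringFamily C)
    (W : {B // B ∈ C} → EuclideanSpace ℝ (Fin n) → ℝ)
    (α₁ α₂ : ℝ≥0 → ℝ≥0) (γ : ℝ≥0)
    (hα₁ : IsClassKInf α₁) (hα₂ : IsClassKInf α₂) (hγ : γ < 1)
    (hWcont : ∀ B, Continuous (W B))
    (hsand : ∀ B x, (α₁ ‖x‖₊ : ℝ) ≤ W B x ∧ W B x ≤ (α₂ ‖x‖₊ : ℝ))
    (hdec : ∀ (B C' : {B // B ∈ C}) (h : S),
      (fun w => h :: w) '' (B : Set (List S)) ⊆ (C' : Set (List S)) →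
      ∀ x, W C' (f h x) ≤ (γ : ℝ) * W B x) :
    ∀ (σ : ℕ → S) (x0 : EuclideanSpace ℝ (Fin n)) (k : ℕ),
      ‖sol f σ x0 k‖₊ ≤ Function.invFun α₁ (γ ^ k * α₂ ‖x0‖₊) :=
  mblf_explicit_bound_general n f C hC W α₁ α₂ γ hα₁ hsand hdec
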